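/- arXiv:math/9204240 — 2 statements merged into one kernel-verified Lean document; each statement's English description precedes it below -/
import Mathlib

section
/- Let a, l, s > 0 with l < 1, and 0 < β < α ≤ 1. Define C₀ = 1 + ε and inductively suppose C_{M−1} ≤ C_∞ = 1 + ε + δ^β/(1 − l^{α−β}) where δ ≤ 1 is small enough that Θ = (L₀/s)(1 + ε + 1/(1−l^{α−β}))^{1+α} δ^{α−β} ≤ 1. Set B_M = (L₀/s)·C_{M−1}^{1+α}·δ^α·l^{(α−β)M}. Then B_M ≤ δ^β · l^{(α−β)M}, and consequently C_{M−1} + B_M ≤ C_M where C_M = 1 + ε + δ^β·Σ_{i=0}^M l^{(α−β)i}. -/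
open Finset

/-- Writing `δ^α = δ^(α-β) δ^β`, the smallness condition at the largest admissible constant `K`
absorbs everything but the factor `δ^β`. -/
theorem mul_rpow_mul_rpow_le_of_smallness {A K c δ p α β t : ℝ} (hA : 0 ≤ A) (hc : 0 ≤ c)
    (hcK : c ≤ K) (hδ : 0 < δ) (hp : 0 ≤ p) (ht : 0 ≤ t)
    (hΘ : A * K ^ p * δ ^ (α - β) ≤ 1) :
    A * c ^ p * δ ^ α * t ≤ δ ^ β * t := by
  have hsmall : A * c ^ p * δ ^ (α - β) ≤ 1 :=
    le_trans (by gcongr) hΘ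
  calc A * c ^ p * δ ^ α * t = (A * c ^ p * δ ^ (α - β)) * (δ ^ β * t) := by
        rw [← sub_add_cancel α β, Real.rpow_add hδ, add_sub_cancel_right]; ring
    _ ≤ δ ^ β * t := mul_le_of_le_one_left (by positivity) hsmall

theorem stmt_8_general (ε δ l α β L₀ s : ℝ)
    (hε : 0 < ε) (hδ0 : 0 < δ) (hδ1 : δ ≤ 1) (hl0 : 0 < l) (hl1 : l < 1)
    (hβ : 0 < β) (hβα : β < α) (hL : 0 < L₀) (hs : 0 < s)
    (hΘ : (L₀ / s) * (1 + ε + 1 / (1 - l ^ (α - β))) ^ (1 + α) * δ ^ (α - β) ≤ 1)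
    (C : ℕ → ℝ)
    (hC : ∀ m, C m = 1 + ε + δ ^ β * ∑ i ∈ Finset.range (m + 1), (l ^ (α - β)) ^ i)
    (M : ℕ) (hM : 1 ≤ M)
    (hCM : C (M - 1) ≤ 1 + ε + δ ^ β / (1 - l ^ (α - β))) :
    (L₀ / s) * (C (M - 1)) ^ (1 + α) * δ ^ α * l ^ ((α - β) * (M : ℝ)) ≤
      δ ^ β * l ^ ((α - β) * (M : ℝ)) ∧
    C (M - 1) + (L₀ / s) * (C (M - 1)) ^ (1 + α) * δ ^ α * l ^ ((α - β) * (M : ℝ)) ≤ C M := by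
  have hq1 : l ^ (α - β) < 1 := Real.rpow_lt_one hl0.le hl1 (sub_pos.2 hβα)
  have hδβ : δ ^ β ≤ 1 := Real.rpow_le_one hδ0.le hδ1 hβ.le
  have hC0 : 0 ≤ C (M - 1) := by rw [hC]; positivity
  have hCK : C (M - 1) ≤ 1 + ε + 1 / (1 - l ^ (α - β)) :=
    hCM.trans (by gcongr)
  have hB := mul_rpow_mul_rpow_le_of_smallness (div_pos hL hs).le hC0 hCK hδ0
    (by linarith) (Real.rpow_nonneg hl0.le ((α - β) * M)) hΘ
  refine ⟨hB, ?_⟩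
  obtain ⟨n, rfl⟩ := Nat.exists_eq_add_of_le' hM
  have hstep : C (n + 1) = C n + δ ^ β * l ^ ((α - β) * ((n + 1 : ℕ) : ℝ)) := by
    rw [hC, hC, sum_range_succ _ (n + 1), Real.rpow_mul_natCast hl0.le]; ring
  rw [Nat.add_sub_cancel] at hB ⊢
  linarith

/-- The key numerical estimate of the distortion theorem: with
`C m = 1 + ε + δ^β Σ_{i≤m} (l^{α-β})^i` and the smallness condition `Θ_ε ≤ 1`,
the error `B_M = (L₀/s) C_{M-1}^{1+α} δ^α l^{(α-β)M}` satisfies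
`B_M ≤ δ^β l^{(α-β)M}` and hence `C_{M-1} + B_M ≤ C_M`. -/
theorem stmt_8 (ε δ l α β L₀ s : ℝ)
    (hε : 0 < ε) (hδ0 : 0 < δ) (hδ1 : δ ≤ 1) (hl0 : 0 < l) (hl1 : l < 1)
    (hβ : 0 < β) (hβα : β < α) (hα : α ≤ 1) (hL : 0 < L₀) (hs : 0 < s)
    (hΘ : (L₀ / s) * (1 + ε + 1 / (1 - l ^ (α - β))) ^ (1 + α) * δ ^ (α - β) ≤ 1)
    (C : ℕ → ℝ)
    (hC : ∀ m, C m = 1 + ε + δ ^ β * ∑ i ∈ Finset.range (m + 1), (l ^ (α - β)) ^ i)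
    (M : ℕ) (hM : 1 ≤ M)
    (hCM : C (M - 1) ≤ 1 + ε + δ ^ β / (1 - l ^ (α - β))) :
    (L₀ / s) * (C (M - 1)) ^ (1 + α) * δ ^ α * l ^ ((α - β) * (M : ℝ)) ≤
      δ ^ β * l ^ ((α - β) * (M : ℝ)) ∧
    C (M - 1) + (L₀ / s) * (C (M - 1)) ^ (1 + α) * δ ^ α * l ^ ((α - β) * (M : ℝ)) ≤ C M :=
  stmt_8_general ε δ l α β L₀ s hε hδ0 hδ1 hl0 hl1 hβ hβα hL hs hΘ C hC M hM hCM
end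

section
/- Let g : ℂ → ℂ with g(w) = g(z) + Dg(z)(w−z) + R(w,z), where Dg(z) is invertible with smallest singular value s > 0, and |R(w,z)| ≤ η·s·|w−z| for |w−z| ≤ r with η < 1. Then for any w with 0 < |w − z| ≤ r, the angle θ between the vectors g(w) − g(z) and Dg(z)(w − z) satisfies sin θ ≤ η, hence θ ≤ arcsin(η). -/
/-!
If `‖u - v‖ ≤ η ‖v‖`, then `u` lies in the cone of half-angle `arcsin η` around `v`: the distance
`sin ∠(u, v) · ‖v‖` from `v` to the line `ℝ u` is at most `‖u - v‖`, and `⟪u, v⟫ ≥ 0` keeps the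
angle in `[0, π/2]`, where `arcsin` inverts `sin`. With `u = g w - g z`, `v = T (w - z)`, the bound
`‖T x‖ ≥ s ‖x‖` turns the remainder estimate into exactly this hypothesis.
-/

/-- The angle between two vectors of `ℂ ≅ ℝ²` (via the real inner product `re (u * conj v)`). -/
noncomputable def myAngle (u v : ℂ) : ℝ :=
  Real.arccos ((u * (starRingEnd ℂ) v).re / (‖u‖ * ‖v‖))

open Real InnerProductGeometry
open scoped InnerProductSpace

section InnerProductSpace

variable {V : Type*} [NormedAddCommGroup V] [InnerProductSpace ℝ V]

theorem sin_angle_mul_norm_le_norm_sub (u v : V) : sin (angle u v) * ‖v‖ ≤ ‖u - v‖ := by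
  rcases eq_or_ne u 0 with rfl | hu
  · simp
  have hu' : 0 < ‖u‖ := norm_pos_iff.2 hu
  refine le_of_mul_le_mul_right ?_ hu'
  calc sin (angle u v) * ‖v‖ * ‖u‖ = √(⟪u, u⟫_ℝ * ⟪v, v⟫_ℝ - ⟪u, v⟫_ℝ * ⟪u, v⟫_ℝ) := by
        rw [← sin_angle_mul_norm_mul_norm]; ring
    _ ≤ √((‖u - v‖ * ‖u‖) ^ 2) := by
        apply Real.sqrt_le_sqrt
        rw [mul_pow, ← real_inner_self_eq_norm_sq, ← real_inner_self_eq_norm_sq]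
        simp only [inner_sub_left, inner_sub_right, real_inner_comm u v]
        -- the gap is `(⟪u, u⟫ - ⟪u, v⟫)²`: the Gram determinant of `(u, v)` equals that of `(u, u - v)`
        nlinarith [sq_nonneg (⟪u, u⟫_ℝ - ⟪u, v⟫_ℝ)]
    _ = ‖u - v‖ * ‖u‖ := Real.sqrt_sq (by positivity)

theorem real_inner_nonneg_of_norm_sub_le {u v : V} (h : ‖u - v‖ ≤ ‖v‖) : 0 ≤ ⟪u, v⟫_ℝ := by
  have hsq : ‖u - v‖ ^ 2 ≤ ‖v‖ ^ 2 := pow_le_pow_left₀ (norm_nonneg _) h 2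
  rw [norm_sub_sq_real] at hsq
  nlinarith [sq_nonneg ‖u‖]

theorem angle_le_pi_div_two_of_norm_sub_le {u v : V} (h : ‖u - v‖ ≤ ‖v‖) :
    angle u v ≤ π / 2 :=
  arccos_le_pi_div_two.2 (div_nonneg (real_inner_nonneg_of_norm_sub_le h) (by positivity))

theorem sin_angle_le_of_norm_sub_le {u v : V} {η : ℝ} (hv : v ≠ 0)
    (h : ‖u - v‖ ≤ η * ‖v‖) : sin (angle u v) ≤ η :=
  le_of_mul_le_mul_right ((sin_angle_mul_norm_le_norm_sub u v).trans h) (norm_pos_iff.2 hv)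

theorem angle_le_arcsin_of_norm_sub_le {u v : V} {η : ℝ} (hv : v ≠ 0) (hη : η ≤ 1)
    (h : ‖u - v‖ ≤ η * ‖v‖) : angle u v ≤ arcsin η := by
  have hacute := angle_le_pi_div_two_of_norm_sub_le
    (h.trans (mul_le_of_le_one_left (norm_nonneg v) hη))
  refine (le_arcsin_iff_sin_le' ⟨?_, hacute⟩).2 (sin_angle_le_of_norm_sub_le hv h)
  linarith [angle_nonneg u v, pi_pos]

end InnerProductSpace

theorem myAngle_eq_angle (u v : ℂ) : myAngle u v = angle u v := by
  rw [myAngle, angle, real_inner_comm, Complex.inner]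

theorem stmt_14_general (g : ℂ → ℂ) (z : ℂ) (T : ℂ ≃L[ℝ] ℂ) (s η r : ℝ)
    (hη0 : 0 ≤ η) (hη : η < 1)
    (hlb : ∀ v : ℂ, s * ‖v‖ ≤ ‖T v‖)
    (hR : ∀ w : ℂ, ‖w - z‖ ≤ r → ‖g w - g z - T (w - z)‖ ≤ η * s * ‖w - z‖) :
    ∀ w : ℂ, 0 < ‖w - z‖ → ‖w - z‖ ≤ r →
      Real.sin (myAngle (g w - g z) (T (w - z))) ≤ η ∧
      myAngle (g w - g z) (T (w - z)) ≤ Real.arcsin η := by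
  intro w hw hwr
  have hv : T (w - z) ≠ 0 := T.map_ne_zero_iff.2 (norm_pos_iff.1 hw)
  have hclose : ‖g w - g z - T (w - z)‖ ≤ η * ‖T (w - z)‖ :=
    calc ‖g w - g z - T (w - z)‖ ≤ η * (s * ‖w - z‖) := by rw [← mul_assoc]; exact hR w hwr
      _ ≤ η * ‖T (w - z)‖ := mul_le_mul_of_nonneg_left (hlb _) hη0
  rw [myAngle_eq_angle]
  exact ⟨sin_angle_le_of_norm_sub_le hv hclose, angle_le_arcsin_of_norm_sub_le hv hη.le hclose⟩

/-- If the remainder of the linear approximation is at most `η·s·|w−z|` with `η < 1`, where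
`s` is a lower bound for the stretching of `Dg(z) = T`, then the angle `θ` between
`g(w) − g(z)` and `T(w−z)` satisfies `sin θ ≤ η`, hence `θ ≤ arcsin η`. -/
theorem stmt_14 (g : ℂ → ℂ) (z : ℂ) (T : ℂ ≃L[ℝ] ℂ) (s η r : ℝ)
    (hs : 0 < s) (hη0 : 0 ≤ η) (hη : η < 1) (hr : 0 < r)
    (hlb : ∀ v : ℂ, s * ‖v‖ ≤ ‖T v‖)
    (hR : ∀ w : ℂ, ‖w - z‖ ≤ r → ‖g w - g z - T (w - z)‖ ≤ η * s * ‖w - z‖) :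
    ∀ w : ℂ, 0 < ‖w - z‖ → ‖w - z‖ ≤ r →
      Real.sin (myAngle (g w - g z) (T (w - z))) ≤ η ∧
      myAngle (g w - g z) (T (w - z)) ≤ Real.arcsin η :=
  stmt_14_general g z T s η r hη0 hη hlb hR
end
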